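/- Let B be a graded bialgebra and (B[t]/(t^{l+1}), m_t^l, Δ_t^l) an l-th level graded bialgebra deformation with obstruction triple (F, H, G) as defined from the m_s and Δ_s (F(a⊗b⊗c) = Σ_{s=1}^{l}[m_s(m_{l+1−s}(a⊗b)⊗c) − m_s(a⊗m_{l+1−s}(b⊗c))], H(a⊗b) = Σ_{s=1}^{l} Δ_s(m_{l+1−s}(a⊗b)) − Σ_{s+r+s'+r'=l+1, s,r,s',r' ≤ l} (m_{s'} ⊗ m_{r'})∘τ_{23}∘(Δ_s ⊗ Δ_r)(a⊗b) with not all indices (s,r,s',r') giving the degree-0 term, G(c) = Σ_{s=1}^{l}[(Δ_s ⊗ Id)∘Δ_{l+1−s}(c) − (Id ⊗ Δ_s)∘Δ_{l+1−s}(c)]). If there exist homogeneous maps f : B⊗B → B and g : B → B⊗B of degree −(l+1), vanishing appropriately on units and counits, with F = δ_h^{1,2}(f), H = δ_c^{1,2}(f) + δ_h^{2,1}(g), and G = δ_c^{2,1}(g), then (B[t]/(t^{l+2}), m_t^l + t^{l+1}f, Δ_t^l + t^{l+1}g) is an (l+1)-th level graded bialgebra deformation of B extending the given one. -/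
import Mathlib


open TensorProduct

namespace GBD

variable (K B : Type*) [Field K] [Ring B] [Bialgebra K B]

/-- A grading `B = ⊕_{i ≥ 0} B_(i)` making `B` a graded bialgebra. -/
structure GradedBialgebra where
  grade : ℕ → Submodule K B
  internal : DirectSum.IsInternal grade
  one_mem : (1 : B) ∈ grade 0
  mul_mem : ∀ i j : ℕ, ∀ x ∈ grade i, ∀ y ∈ grade j, x * y ∈ grade (i + j)
  comul_mem : ∀ n : ℕ, ∀ x ∈ grade n,
    Coalgebra.comul (R := K) x ∈
      ⨆ p : {p : ℕ × ℕ // p.1 + p.2 = n},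
        LinearMap.range (TensorProduct.mapIncl (grade p.1.1) (grade p.1.2))
  counit_zero : ∀ n : ℕ, n ≠ 0 → ∀ x ∈ grade n, Coalgebra.counit (R := K) x = 0

/-- The degree-`n` component of the induced grading on `B ⊗ B`. -/
noncomputable def grade2 (G : GradedBialgebra K B) (n : ℕ) : Submodule K (B ⊗[K] B) :=
  ⨆ p : {p : ℕ × ℕ // p.1 + p.2 = n},
    LinearMap.range (TensorProduct.mapIncl (G.grade p.1.1) (G.grade p.1.2))

/-- The multiplication of `B` as a linear map. -/
noncomputable def mulM : B ⊗[K] B →ₗ[K] B := LinearMap.mul' K B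

/-- The flip of the middle two tensor factors, `τ₂₃`. -/
noncomputable def ttc : (B ⊗[K] B) ⊗[K] (B ⊗[K] B) →ₗ[K] (B ⊗[K] B) ⊗[K] (B ⊗[K] B) :=
  (TensorProduct.tensorTensorTensorComm K B B B B).toLinearMap

/-- The comultiplication of `B ⊗ B`, `τ₂₃ ∘ (Δ ⊗ Δ)`. -/
noncomputable def comul2 : B ⊗[K] B →ₗ[K] (B ⊗[K] B) ⊗[K] (B ⊗[K] B) :=
  ttc K B ∘ₗ TensorProduct.map (Coalgebra.comul (R := K) (A := B))
    (Coalgebra.comul (R := K) (A := B))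

/-- The associator `(B ⊗ B) ⊗ B → B ⊗ (B ⊗ B)`. -/
noncomputable def assocM : (B ⊗[K] B) ⊗[K] B →ₗ[K] B ⊗[K] (B ⊗[K] B) :=
  (TensorProduct.assoc K B B B).toLinearMap

/-- Collapsing the counit applied to the first factor, `(ε ⊗ Id) : B ⊗ B → B`. -/
noncomputable def counitL : B ⊗[K] B →ₗ[K] B :=
  (TensorProduct.lid K B).toLinearMap ∘ₗ
    LinearMap.rTensor B (Coalgebra.counit (R := K) (A := B))

/-- Collapsing the counit applied to the second factor, `(Id ⊗ ε) : B ⊗ B → B`. -/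
noncomputable def counitR : B ⊗[K] B →ₗ[K] B :=
  (TensorProduct.rid K B).toLinearMap ∘ₗ
    LinearMap.lTensor B (Coalgebra.counit (R := K) (A := B))

/-- The deformed multiplication `m_t¹` on `B[t]/(t²)`, realized on pairs
`(x₀, x₁) ↔ x₀ + x₁t`: `m_t¹(x, y) = (x₀y₀, x₀y₁ + x₁y₀ + f(x₀ ⊗ y₀))`. -/
noncomputable def defMul (f : B ⊗[K] B →ₗ[K] B) (x y : B × B) : B × B :=
  (x.1 * y.1, x.1 * y.2 + x.2 * y.1 + f (x.1 ⊗ₜ[K] y.1))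

/-- The deformed comultiplication `Δ_t¹` on `B[t]/(t²)`, realized on pairs:
`Δ_t¹(x) = (Δ(x₀), Δ(x₁) + g(x₀))`. -/
noncomputable def defComul (g : B →ₗ[K] B ⊗[K] B) (x : B × B) :
    (B ⊗[K] B) × (B ⊗[K] B) :=
  (Coalgebra.comul x.1, Coalgebra.comul x.2 + g x.1)

/-- `(Δ_t¹ ⊗ Id)` on `(B ⊗ B)[t]/(t²)` (in coordinates, transported to `B ⊗ (B ⊗ B)`). -/
noncomputable def defComulLeft (g : B →ₗ[K] B ⊗[K] B) (y : (B ⊗[K] B) × (B ⊗[K] B)) :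
    (B ⊗[K] (B ⊗[K] B)) × (B ⊗[K] (B ⊗[K] B)) :=
  (assocM K B (LinearMap.rTensor B (Coalgebra.comul (R := K) (A := B)) y.1),
   assocM K B (LinearMap.rTensor B (Coalgebra.comul (R := K) (A := B)) y.2) +
     assocM K B (LinearMap.rTensor B g y.1))

/-- `(Id ⊗ Δ_t¹)` on `(B ⊗ B)[t]/(t²)`. -/
noncomputable def defComulRight (g : B →ₗ[K] B ⊗[K] B) (y : (B ⊗[K] B) × (B ⊗[K] B)) :
    (B ⊗[K] (B ⊗[K] B)) × (B ⊗[K] (B ⊗[K] B)) :=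
  (LinearMap.lTensor B (Coalgebra.comul (R := K) (A := B)) y.1,
   LinearMap.lTensor B (Coalgebra.comul (R := K) (A := B)) y.2 +
     LinearMap.lTensor B g y.1)

/-- The deformed multiplication of `(B ⊗ B)[t]/(t²) = B[t]/(t²) ⊗_{K[t]/(t²)} B[t]/(t²)`
induced by `m_t¹` on both legs. -/
noncomputable def defMul2 (f : B ⊗[K] B →ₗ[K] B) (u v : (B ⊗[K] B) × (B ⊗[K] B)) :
    (B ⊗[K] B) × (B ⊗[K] B) :=
  (LinearMap.mul' K (B ⊗[K] B) (u.1 ⊗ₜ[K] v.1),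
   LinearMap.mul' K (B ⊗[K] B) (u.1 ⊗ₜ[K] v.2) +
     LinearMap.mul' K (B ⊗[K] B) (u.2 ⊗ₜ[K] v.1) +
       ((TensorProduct.map (mulM K B) f + TensorProduct.map f (mulM K B)) ∘ₗ ttc K B)
         (u.1 ⊗ₜ[K] v.1))

/-- A first-level (`1`-th level) graded bialgebra deformation of the graded bialgebra `B`:
a `K[t]/(t²)`-bialgebra structure on `B[t]/(t²)` (realized on pairs), with multiplication
`m_t¹ = m + ft`, comultiplication `Δ_t¹ = Δ + gt`, identity `1_B`, counit
`ε_t(bt^j) = ε(b)t^j`, and all structure maps homogeneous of degree zero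
(`f`, `g` homogeneous of degree `−1`). -/
structure OneDeformation (G : GradedBialgebra K B) where
  f : B ⊗[K] B →ₗ[K] B
  g : B →ₗ[K] B ⊗[K] B
  f_deg : ∀ (n : ℕ) (x : B ⊗[K] B), x ∈ grade2 K B G (n + 1) → f x ∈ G.grade n
  f_deg0 : ∀ x ∈ grade2 K B G 0, f x = 0
  g_deg : ∀ (n : ℕ) (x : B), x ∈ G.grade (n + 1) → g x ∈ grade2 K B G n
  g_deg0 : ∀ x ∈ G.grade 0, g x = 0
  assoc : ∀ x y z : B × B, defMul K B f (defMul K B f x y) z = defMul K B f x (defMul K B f y z)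
  one_mul' : ∀ x : B × B, defMul K B f ((1 : B), (0 : B)) x = x
  mul_one' : ∀ x : B × B, defMul K B f x ((1 : B), (0 : B)) = x
  counit_mul : ∀ x y : B × B,
    Coalgebra.counit (R := K) ((defMul K B f x y).2) =
      Coalgebra.counit (R := K) x.1 * Coalgebra.counit (R := K) y.2 +
        Coalgebra.counit (R := K) x.2 * Coalgebra.counit (R := K) y.1
  coassoc : ∀ x : B × B,
    defComulLeft K B g (defComul K B g x) = defComulRight K B g (defComul K B g x)
  counit_comul_left : ∀ x : B × B,
    (counitL K B (defComul K B g x).1, counitL K B (defComul K B g x).2) = x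
  counit_comul_right : ∀ x : B × B,
    (counitR K B (defComul K B g x).1, counitR K B (defComul K B g x).2) = x
  compat : ∀ x y : B × B,
    defComul K B g (defMul K B f x y) = defMul2 K B f (defComul K B g x) (defComul K B g y)
  comul_one : defComul K B g ((1 : B), (0 : B)) = (Coalgebra.comul (1 : B), 0)
/-- An `l`-th level graded bialgebra deformation of the graded bialgebra `B`: a
`K[t]/(t^{l+1})`-bialgebra structure `(B[t]/(t^{l+1}), m_t^l, Δ_t^l)` with `deg t = 1`,
all structure maps homogeneous of degree zero, identity `1_B`, counit
`ε_t(bt^j) = ε(b)t^j`, reducing to `B` modulo `t`.  It is recorded through its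
coefficient families `m_t^l = Σ_s m_s t^s`, `Δ_t^l = Σ_s Δ_s t^s` (`m_s`, `Δ_s`
homogeneous of degree `−s`), the bialgebra axioms being equivalent to the unit/counit
conditions together with the identities (2.3), (2.4), (2.5) of the paper. -/
structure LevelDeformation (G : GradedBialgebra K B) (l : ℕ) where
  ms : ℕ → (B ⊗[K] B →ₗ[K] B)
  Δs : ℕ → (B →ₗ[K] B ⊗[K] B)
  ms_zero : ms 0 = mulM K B
  Δs_zero : Δs 0 = Coalgebra.comul
  ms_trunc : ∀ s : ℕ, l < s → ms s = 0
  Δs_trunc : ∀ s : ℕ, l < s → Δs s = 0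
  ms_deg : ∀ (s n : ℕ) (x : B ⊗[K] B), x ∈ grade2 K B G (n + s) → ms s x ∈ G.grade n
  ms_deg0 : ∀ s n : ℕ, n < s → ∀ x ∈ grade2 K B G n, ms s x = 0
  Δs_deg : ∀ (s n : ℕ) (x : B), x ∈ G.grade (n + s) → Δs s x ∈ grade2 K B G n
  Δs_deg0 : ∀ s n : ℕ, n < s → ∀ x ∈ G.grade n, Δs s x = 0
  ms_one_left : ∀ s : ℕ, 1 ≤ s → ∀ b : B, ms s ((1 : B) ⊗ₜ[K] b) = 0
  ms_one_right : ∀ s : ℕ, 1 ≤ s → ∀ b : B, ms s (b ⊗ₜ[K] (1 : B)) = 0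
  counit_ms : ∀ s : ℕ, 1 ≤ s → (Coalgebra.counit (R := K) (A := B)) ∘ₗ ms s = 0
  Δs_one : ∀ s : ℕ, 1 ≤ s → Δs s (1 : B) = 0
  counit_Δs_left : ∀ s : ℕ, 1 ≤ s → counitL K B ∘ₗ Δs s = 0
  counit_Δs_right : ∀ s : ℕ, 1 ≤ s → counitR K B ∘ₗ Δs s = 0
  eq_assoc : ∀ n : ℕ, 1 ≤ n → n ≤ l → ∀ a b c : B,
    a * ms n (b ⊗ₜ[K] c) - ms n ((a * b) ⊗ₜ[K] c) + ms n (a ⊗ₜ[K] (b * c))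
        - ms n (a ⊗ₜ[K] b) * c
      = ∑ s ∈ Finset.Ioo 0 n,
          (ms s (ms (n - s) (a ⊗ₜ[K] b) ⊗ₜ[K] c) - ms s (a ⊗ₜ[K] ms (n - s) (b ⊗ₜ[K] c)))
  eq_compat : ∀ n : ℕ, 1 ≤ n → n ≤ l →
    TensorProduct.map (ms n) (mulM K B) ∘ₗ comul2 K B
        - Coalgebra.comul ∘ₗ ms n
        + TensorProduct.map (mulM K B) (ms n) ∘ₗ comul2 K B
        + TensorProduct.map (mulM K B) (mulM K B) ∘ₗ ttc K B ∘ₗ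
            TensorProduct.map (Coalgebra.comul (R := K) (A := B)) (Δs n)
        - Δs n ∘ₗ mulM K B
        + TensorProduct.map (mulM K B) (mulM K B) ∘ₗ ttc K B ∘ₗ
            TensorProduct.map (Δs n) (Coalgebra.comul (R := K) (A := B))
      = -(∑ x ∈ (Finset.range n ×ˢ Finset.range n ×ˢ Finset.range n ×ˢ
              Finset.range n).filter
                (fun x => x.1 + x.2.1 + x.2.2.1 + x.2.2.2 = n),
            TensorProduct.map (ms x.2.2.1) (ms x.2.2.2) ∘ₗ ttc K B ∘ₗ
              TensorProduct.map (Δs x.1) (Δs x.2.1))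
        + ∑ s ∈ Finset.Ioo 0 n, Δs s ∘ₗ ms (n - s)
  eq_coassoc : ∀ n : ℕ, 1 ≤ n → n ≤ l →
    LinearMap.lTensor B (Δs n) ∘ₗ Coalgebra.comul
        - assocM K B ∘ₗ LinearMap.rTensor B (Coalgebra.comul (R := K) (A := B)) ∘ₗ Δs n
        + LinearMap.lTensor B (Coalgebra.comul (R := K) (A := B)) ∘ₗ Δs n
        - assocM K B ∘ₗ LinearMap.rTensor B (Δs n) ∘ₗ Coalgebra.comul
      = ∑ s ∈ Finset.Ioo 0 n,
          (assocM K B ∘ₗ LinearMap.rTensor B (Δs (n - s)) ∘ₗ Δs s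
            - LinearMap.lTensor B (Δs (n - s)) ∘ₗ Δs s)

/-- If the obstruction triple `(F, H, G)` of an `l`-th level graded
bialgebra deformation `(B[t]/(t^{l+1}), m_t^l, Δ_t^l)` is the coboundary of a pair
`(f, g)` of homogeneous maps of degree `−(l+1)` (vanishing appropriately on units and
counits), i.e. `F = δ_h^{1,2}(f)`, `H = δ_c^{1,2}(f) + δ_h^{2,1}(g)`, `G = δ_c^{2,1}(g)`,
then `(B[t]/(t^{l+2}), m_t^l + t^{l+1}f, Δ_t^l + t^{l+1}g)` is an `(l+1)`-th level graded
bialgebra deformation of `B` extending the given one. -/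
theorem obstruction_coboundary_extends (G : GradedBialgebra K B) (l : ℕ) (hl : 1 ≤ l)
    (D : LevelDeformation K B G l)
    (f : B ⊗[K] B →ₗ[K] B) (g : B →ₗ[K] B ⊗[K] B)
    (f_deg : ∀ (n : ℕ) (x : B ⊗[K] B), x ∈ grade2 K B G (n + (l + 1)) → f x ∈ G.grade n)
    (f_deg0 : ∀ n : ℕ, n < l + 1 → ∀ x ∈ grade2 K B G n, f x = 0)
    (g_deg : ∀ (n : ℕ) (x : B), x ∈ G.grade (n + (l + 1)) → g x ∈ grade2 K B G n)
    (g_deg0 : ∀ n : ℕ, n < l + 1 → ∀ x ∈ G.grade n, g x = 0)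
    (f_one_left : ∀ b : B, f ((1 : B) ⊗ₜ[K] b) = 0)
    (f_one_right : ∀ b : B, f (b ⊗ₜ[K] (1 : B)) = 0)
    (counit_f : (Coalgebra.counit (R := K) (A := B)) ∘ₗ f = 0)
    (g_one : g (1 : B) = 0)
    (counit_g_left : counitL K B ∘ₗ g = 0)
    (counit_g_right : counitR K B ∘ₗ g = 0)
    (hF : ∀ a b c : B,
      ∑ s ∈ Finset.Ioo 0 (l + 1),
          (D.ms s (D.ms (l + 1 - s) (a ⊗ₜ[K] b) ⊗ₜ[K] c)
            - D.ms s (a ⊗ₜ[K] D.ms (l + 1 - s) (b ⊗ₜ[K] c)))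
        = a * f (b ⊗ₜ[K] c) - f ((a * b) ⊗ₜ[K] c) + f (a ⊗ₜ[K] (b * c))
            - f (a ⊗ₜ[K] b) * c)
    (hH :
      (∑ s ∈ Finset.Ioo 0 (l + 1), D.Δs s ∘ₗ D.ms (l + 1 - s))
        - (∑ x ∈ (Finset.range (l + 1) ×ˢ Finset.range (l + 1) ×ˢ
              Finset.range (l + 1) ×ˢ Finset.range (l + 1)).filter
                (fun x => x.1 + x.2.1 + x.2.2.1 + x.2.2.2 = l + 1),
            TensorProduct.map (D.ms x.2.2.1) (D.ms x.2.2.2) ∘ₗ ttc K B ∘ₗ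
              TensorProduct.map (D.Δs x.1) (D.Δs x.2.1))
      = TensorProduct.map f (mulM K B) ∘ₗ comul2 K B
          - Coalgebra.comul ∘ₗ f
          + TensorProduct.map (mulM K B) f ∘ₗ comul2 K B
          + TensorProduct.map (mulM K B) (mulM K B) ∘ₗ ttc K B ∘ₗ
              TensorProduct.map (Coalgebra.comul (R := K) (A := B)) g
          - g ∘ₗ mulM K B
          + TensorProduct.map (mulM K B) (mulM K B) ∘ₗ ttc K B ∘ₗ
              TensorProduct.map g (Coalgebra.comul (R := K) (A := B)))
    (hG :
      (∑ s ∈ Finset.Ioo 0 (l + 1),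
          (assocM K B ∘ₗ LinearMap.rTensor B (D.Δs s) ∘ₗ D.Δs (l + 1 - s)
            - LinearMap.lTensor B (D.Δs s) ∘ₗ D.Δs (l + 1 - s)))
      = LinearMap.lTensor B g ∘ₗ Coalgebra.comul
          - assocM K B ∘ₗ LinearMap.rTensor B (Coalgebra.comul (R := K) (A := B)) ∘ₗ g
          + LinearMap.lTensor B (Coalgebra.comul (R := K) (A := B)) ∘ₗ g
          - assocM K B ∘ₗ LinearMap.rTensor B g ∘ₗ Coalgebra.comul) :
    ∃ D' : LevelDeformation K B G (l + 1),
      D'.ms = Function.update D.ms (l + 1) f ∧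
      D'.Δs = Function.update D.Δs (l + 1) g := by
  classical
  set f' : ℕ → (B ⊗[K] B →ₗ[K] B) := Function.update D.ms (l + 1) f with hf'
  set g' : ℕ → (B →ₗ[K] B ⊗[K] B) := Function.update D.Δs (l + 1) g with hg'
  have hms : ∀ s : ℕ, s ≠ l + 1 → f' s = D.ms s := fun s hs => Function.update_of_ne hs _ _
  have hms' : f' (l + 1) = f := Function.update_self _ _ _
  have hΔs : ∀ s : ℕ, s ≠ l + 1 → g' s = D.Δs s := fun s hs => Function.update_of_ne hs _ _
  have hΔs' : g' (l + 1) = g := Function.update_self _ _ _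
  refine ⟨⟨f', g', ?_, ?_, ?_, ?_, ?_, ?_, ?_, ?_, ?_, ?_, ?_, ?_, ?_, ?_, ?_, ?_, ?_⟩, rfl, rfl⟩
  · rw [hms 0 (by omega), D.ms_zero]
  · rw [hΔs 0 (by omega), D.Δs_zero]
  · intro s hs
    rw [hms s (by omega)]
    exact D.ms_trunc s (by omega)
  · intro s hs
    rw [hΔs s (by omega)]
    exact D.Δs_trunc s (by omega)
  · intro s n x hx
    by_cases h : s = l + 1
    · subst h; rw [hms']; exact f_deg n x hx
    · rw [hms s h]; exact D.ms_deg s n x hx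
  · intro s n hn x hx
    by_cases h : s = l + 1
    · subst h; rw [hms']; exact f_deg0 n hn x hx
    · rw [hms s h]; exact D.ms_deg0 s n hn x hx
  · intro s n x hx
    by_cases h : s = l + 1
    · subst h; rw [hΔs']; exact g_deg n x hx
    · rw [hΔs s h]; exact D.Δs_deg s n x hx
  · intro s n hn x hx
    by_cases h : s = l + 1
    · subst h; rw [hΔs']; exact g_deg0 n hn x hx
    · rw [hΔs s h]; exact D.Δs_deg0 s n hn x hx
  · intro s hs b
    by_cases h : s = l + 1
    · subst h; rw [hms']; exact f_one_left b
    · rw [hms s h]; exact D.ms_one_left s hs b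
  · intro s hs b
    by_cases h : s = l + 1
    · subst h; rw [hms']; exact f_one_right b
    · rw [hms s h]; exact D.ms_one_right s hs b
  · intro s hs
    by_cases h : s = l + 1
    · subst h; rw [hms']; exact counit_f
    · rw [hms s h]; exact D.counit_ms s hs
  · intro s hs
    by_cases h : s = l + 1
    · subst h; rw [hΔs']; exact g_one
    · rw [hΔs s h]; exact D.Δs_one s hs
  · intro s hs
    by_cases h : s = l + 1
    · subst h; rw [hΔs']; exact counit_g_left
    · rw [hΔs s h]; exact D.counit_Δs_left s hs
  · intro s hs
    by_cases h : s = l + 1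
    · subst h; rw [hΔs']; exact counit_g_right
    · rw [hΔs s h]; exact D.counit_Δs_right s hs
  · -- eq_assoc
    intro n h1 h2 a b c
    have hsum : ∀ m : ℕ, m ≤ l + 1 → ∑ s ∈ Finset.Ioo 0 m,
        (f' s (f' (m - s) (a ⊗ₜ[K] b) ⊗ₜ[K] c) - f' s (a ⊗ₜ[K] f' (m - s) (b ⊗ₜ[K] c)))
        = ∑ s ∈ Finset.Ioo 0 m,
        (D.ms s (D.ms (m - s) (a ⊗ₜ[K] b) ⊗ₜ[K] c)
          - D.ms s (a ⊗ₜ[K] D.ms (m - s) (b ⊗ₜ[K] c))) := by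
      intro m hm
      refine Finset.sum_congr rfl fun s hs => ?_
      simp only [Finset.mem_Ioo] at hs
      rw [hms s (by omega), hms (m - s) (by omega)]
    by_cases h : n = l + 1
    · subst h
      rw [hms', hsum (l + 1) le_rfl]
      exact (hF a b c).symm
    · rw [hms n h, hsum n (by omega)]
      exact D.eq_assoc n h1 (by omega) a b c
  · -- eq_compat
    intro n h1 h2
    have hsum1 : ∀ m : ℕ, m ≤ l + 1 →
        (∑ s ∈ Finset.Ioo 0 m, g' s ∘ₗ f' (m - s))
        = ∑ s ∈ Finset.Ioo 0 m, D.Δs s ∘ₗ D.ms (m - s) := by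
      intro m hm
      refine Finset.sum_congr rfl fun s hs => ?_
      simp only [Finset.mem_Ioo] at hs
      rw [hΔs s (by omega), hms (m - s) (by omega)]
    have hsum2 : ∀ m : ℕ, m ≤ l + 1 →
        (∑ x ∈ (Finset.range m ×ˢ Finset.range m ×ˢ Finset.range m ×ˢ
              Finset.range m).filter
                (fun x => x.1 + x.2.1 + x.2.2.1 + x.2.2.2 = m),
            TensorProduct.map (f' x.2.2.1) (f' x.2.2.2) ∘ₗ ttc K B ∘ₗ
              TensorProduct.map (g' x.1) (g' x.2.1))
        = ∑ x ∈ (Finset.range m ×ˢ Finset.range m ×ˢ Finset.range m ×ˢ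
              Finset.range m).filter
                (fun x => x.1 + x.2.1 + x.2.2.1 + x.2.2.2 = m),
            TensorProduct.map (D.ms x.2.2.1) (D.ms x.2.2.2) ∘ₗ ttc K B ∘ₗ
              TensorProduct.map (D.Δs x.1) (D.Δs x.2.1) := by
      intro m hm
      refine Finset.sum_congr rfl fun x hx => ?_
      simp only [Finset.mem_filter, Finset.mem_product, Finset.mem_range] at hx
      rw [hms x.2.2.1 (by omega), hms x.2.2.2 (by omega), hΔs x.1 (by omega),
        hΔs x.2.1 (by omega)]
    by_cases h : n = l + 1
    · subst h
      rw [hms', hΔs', hsum1 (l + 1) le_rfl, hsum2 (l + 1) le_rfl, ← hH]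
      abel
    · rw [hms n h, hΔs n h, hsum1 n (by omega), hsum2 n (by omega)]
      exact D.eq_compat n h1 (by omega)
  · -- eq_coassoc
    intro n h1 h2
    have hsum : ∀ m : ℕ, m ≤ l + 1 →
        (∑ s ∈ Finset.Ioo 0 m,
          (assocM K B ∘ₗ LinearMap.rTensor B (g' (m - s)) ∘ₗ g' s
            - LinearMap.lTensor B (g' (m - s)) ∘ₗ g' s))
        = ∑ s ∈ Finset.Ioo 0 m,
          (assocM K B ∘ₗ LinearMap.rTensor B (D.Δs (m - s)) ∘ₗ D.Δs s
            - LinearMap.lTensor B (D.Δs (m - s)) ∘ₗ D.Δs s) := by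
      intro m hm
      refine Finset.sum_congr rfl fun s hs => ?_
      simp only [Finset.mem_Ioo] at hs
      rw [hΔs s (by omega), hΔs (m - s) (by omega)]
    have hflip : ∑ s ∈ Finset.Ioo 0 (l + 1),
          (assocM K B ∘ₗ LinearMap.rTensor B (D.Δs (l + 1 - s)) ∘ₗ D.Δs s
            - LinearMap.lTensor B (D.Δs (l + 1 - s)) ∘ₗ D.Δs s)
        = ∑ s ∈ Finset.Ioo 0 (l + 1),
          (assocM K B ∘ₗ LinearMap.rTensor B (D.Δs s) ∘ₗ D.Δs (l + 1 - s)
            - LinearMap.lTensor B (D.Δs s) ∘ₗ D.Δs (l + 1 - s)) := by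
      refine Finset.sum_nbij' (fun s => l + 1 - s) (fun s => l + 1 - s) ?_ ?_ ?_ ?_ ?_ <;>
          intro s hs <;> simp only [Finset.mem_Ioo] at hs ⊢
      · omega
      · omega
      · omega
      · omega
      · rw [show l + 1 - (l + 1 - s) = s by omega]
    by_cases h : n = l + 1
    · subst h
      rw [hΔs', hsum (l + 1) le_rfl, hflip]
      exact hG.symm
    · rw [hΔs n h, hsum n (by omega)]
      exact D.eq_coassoc n h1 (by omega)

end GBD
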